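/- Second derivative increment bound (inequality (4.7) in the proof of Proposition 4.6): Let 1 ≤ l ≤ d be integers and p₁ ∈ (0,1). Write points of ℝ^d as (w,x,y) with w ∈ ℝ, x ∈ ℝ^{l−1}, y ∈ ℝ^{d−l}. Let u : ℝ^{d−l} → [0,∞) be continuous, γ, β ≥ 0, and let L : ℝ^d → ℝ be twice continuously differentiable with |L(w,x,y)| ≤ u(y), |∂₁ L(w,x,y)| ≤ (1 + ‖(w,x)‖^{γ}) u(y) and |∂²₁₁ L(w,x,y)| ≤ (1 + ‖(w,x)‖^{β}) u(y) for all (w,x,y), where ‖·‖ is the maximum norm. Define g(w,x,y) := |w|^{p₁} L(w,x,y). Then there exist constants K > 0 and h′ ≥ 0 such that for all w ≠ 0, all z ∈ ℝ with |z| ≤ |w|/2, all x ∈ ℝ^{l−1} and y ∈ ℝ^{d−l}: |∂₁ g(w+z,x,y) − ∂₁ g(w,x,y)| ≤ K u(y) |z| (1 + ‖(w,x)‖^{h′} + |z|^{h′}) (1 + |w|^{p₁−2}). -/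

import Mathlib

/-!
Restricting `L` to the line `w ↦ (w, x, y)` reduces everything to one variable: for
`g(t) = |t|^p f(t)` with `f` twice differentiable, on the segment from `w` to `w + z` we have
`|w|/2 ≤ |t| ≤ 3|w|/2`, so `g` is smooth there with
`g'' = p(p-1)|t|^{p-2} f + 2p|t|^{p-1} sign(t) f' + |t|^p f''`.
Comparing each `|t|^{p-k}` with `|w|^{2-k} |w|^{p-2}` bounds `|g''|` by
`25 (1 + 2^γ + 2^β) u(y) |w|^{p-2} (1 + ‖(w,x)‖^{γ+β+2})`, since every power `M^c` with
`0 ≤ c ≤ γ + β + 2` is at most `1 + M^{γ+β+2}`. The mean value inequality on the segment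
then gives the claim with `K = 25 (1 + 2^γ + 2^β)` and `h' = γ + β + 2`.
-/

open Filter Topology

/-- Splice `w ∈ ℝ`, `x ∈ ℝ^{l−1}` and `y ∈ ℝ^{d−l}` into a point `(w,x,y)` of `ℝ^d`. -/
def splice3 (d l : ℕ) (hl : 1 ≤ l) (hld : l ≤ d) (w : ℝ)
    (x : Fin (l - 1) → ℝ) (y : Fin (d - l) → ℝ) : Fin d → ℝ :=
  fun j =>
    if h0 : (j : ℕ) = 0 then w
    else if h : (j : ℕ) < l then x ⟨(j : ℕ) - 1, by omega⟩
    else y ⟨(j : ℕ) - l, by have := j.isLt; omega⟩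

lemma splice3_eq_add_smul (d l : ℕ) (hl : 1 ≤ l) (hld : l ≤ d) (w : ℝ)
    (x : Fin (l - 1) → ℝ) (y : Fin (d - l) → ℝ) :
    splice3 d l hl hld w x y =
      splice3 d l hl hld 0 x y +
        w • Pi.single (⟨0, Nat.lt_of_lt_of_le hl hld⟩ : Fin d) 1 := by
  funext j
  by_cases h0 : (j : ℕ) = 0
  · rw [show j = ⟨0, Nat.lt_of_lt_of_le hl hld⟩ from Fin.ext h0]
    simp [splice3]
  · have hj : j ≠ ⟨0, Nat.lt_of_lt_of_le hl hld⟩ := fun h => h0 (congrArg Fin.val h)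
    simp [splice3, h0, Pi.single_eq_of_ne hj]

lemma hasDerivAt_splice3 (d l : ℕ) (hl : 1 ≤ l) (hld : l ≤ d)
    (x : Fin (l - 1) → ℝ) (y : Fin (d - l) → ℝ) (t : ℝ) :
    HasDerivAt (fun w => splice3 d l hl hld w x y)
      (Pi.single (⟨0, Nat.lt_of_lt_of_le hl hld⟩ : Fin d) 1) t := by
  rw [funext fun w => splice3_eq_add_smul d l hl hld w x y]
  simpa using ((hasDerivAt_id t).smul_const
    (Pi.single (⟨0, Nat.lt_of_lt_of_le hl hld⟩ : Fin d) (1 : ℝ))).const_add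
      (splice3 d l hl hld 0 x y)

lemma hasDerivAt_sign_of_ne_zero {t : ℝ} (ht : t ≠ 0) :
    HasDerivAt (fun a : ℝ => (SignType.sign a : ℝ)) 0 t := by
  rcases ht.lt_or_gt with h | h
  · exact (hasDerivAt_const t (-1 : ℝ)).congr_of_eventuallyEq
      (by filter_upwards [Iio_mem_nhds h] with a ha; simp [show a < 0 from ha])
  · exact (hasDerivAt_const t (1 : ℝ)).congr_of_eventuallyEq
      (by filter_upwards [Ioi_mem_nhds h] with a ha; simp [show 0 < a from ha])

lemma sign_mul_sign_of_ne_zero {t : ℝ} (ht : t ≠ 0) :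
    (SignType.sign t : ℝ) * SignType.sign t = 1 := by
  rcases ht.lt_or_gt with h | h <;> simp [h]

lemma abs_sign_of_ne_zero {t : ℝ} (ht : t ≠ 0) : |(SignType.sign t : ℝ)| = 1 := by
  rcases ht.lt_or_gt with h | h <;> simp [h]

lemma hasDerivAt_abs_rpow_of_ne_zero (p : ℝ) {t : ℝ} (ht : t ≠ 0) :
    HasDerivAt (fun a : ℝ => |a| ^ p) (p * |t| ^ (p - 1) * SignType.sign t) t := by
  convert (hasDerivAt_abs ht).rpow_const (p := p) (Or.inl (abs_ne_zero.2 ht)) using 1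
  ring

section AbsRpowMul

variable {p t : ℝ} {f f₁ f₂ : ℝ → ℝ}

lemma hasDerivAt_abs_rpow_mul {f' : ℝ} (ht : t ≠ 0) (hf : HasDerivAt f f' t) :
    HasDerivAt (fun a => |a| ^ p * f a)
      (p * |t| ^ (p - 1) * SignType.sign t * f t + |t| ^ p * f') t :=
  (hasDerivAt_abs_rpow_of_ne_zero p ht).mul hf

lemma hasDerivAt_deriv_abs_rpow_mul (ht : t ≠ 0) (hf : HasDerivAt f (f₁ t) t)
    (hf₁ : HasDerivAt f₁ (f₂ t) t) :
    HasDerivAt (fun a => p * |a| ^ (p - 1) * SignType.sign a * f a + |a| ^ p * f₁ a)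
      (p * (p - 1) * |t| ^ (p - 2) * f t + 2 * p * |t| ^ (p - 1) * SignType.sign t * f₁ t
        + |t| ^ p * f₂ t) t := by
  have h := ((((hasDerivAt_abs_rpow_of_ne_zero (p - 1) ht).mul
    (hasDerivAt_sign_of_ne_zero ht)).const_mul p).mul hf).add
      (hasDerivAt_abs_rpow_mul (p := p) ht hf₁)
  refine (h.congr_deriv ?_).congr_of_eventuallyEq
    (.of_forall fun a => by simp only [Pi.mul_apply, Pi.add_apply]; ring)
  rw [Pi.mul_apply, show p - 1 - 1 = p - 2 by ring]
  linear_combination p * (p - 1) * |t| ^ (p - 2) * f t * sign_mul_sign_of_ne_zero ht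

end AbsRpowMul

lemma rpow_le_one_add_rpow {M c e : ℝ} (hM : 0 ≤ M) (hc : 0 ≤ c) (hce : c ≤ e) :
    M ^ c ≤ 1 + M ^ e := by
  rcases le_total M 1 with h1 | h1
  · linarith [Real.rpow_le_one hM h1 hc, Real.rpow_nonneg hM e]
  · linarith [Real.rpow_le_rpow_of_exponent_le h1 hce]

lemma rpow_sub_two_le_of_half_le {p a s : ℝ} (hp0 : 0 ≤ p) (hp2 : p ≤ 2) (ha : 0 < a)
    (hs : a / 2 ≤ s) : s ^ (p - 2) ≤ 4 * a ^ (p - 2) := by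
  have htwo : (2 : ℝ) ^ (2 - p) ≤ 4 :=
    calc (2 : ℝ) ^ (2 - p) ≤ 2 ^ (2 : ℝ) :=
          Real.rpow_le_rpow_of_exponent_le one_le_two (by linarith)
      _ = 4 := by rw [Real.rpow_two]; norm_num
  calc s ^ (p - 2) ≤ (a / 2) ^ (p - 2) :=
        Real.rpow_le_rpow_of_nonpos (by positivity) hs (by linarith)
    _ = (2 : ℝ) ^ (2 - p) * a ^ (p - 2) := by
        rw [Real.div_rpow ha.le zero_le_two, div_eq_mul_inv, ← Real.rpow_neg zero_le_two,
          neg_sub, mul_comm]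
    _ ≤ 4 * a ^ (p - 2) := by gcongr

lemma abs_rpow_le_of_mem_annulus {p a t : ℝ} (hp0 : 0 ≤ p) (hp2 : p ≤ 2) (ha : 0 < a)
    (ht : a / 2 ≤ |t|) (ht' : |t| ≤ 3 / 2 * a) :
    |t| ^ (p - 2) ≤ 4 * a ^ (p - 2) ∧ |t| ^ (p - 1) ≤ 6 * a * a ^ (p - 2) ∧
      |t| ^ p ≤ 9 * a ^ 2 * a ^ (p - 2) := by
  have h0 : 0 < |t| := by linarith
  have hP := rpow_sub_two_le_of_half_le hp0 hp2 ha ht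
  have hP0 := Real.rpow_nonneg h0.le (p - 2)
  refine ⟨hP, ?_, ?_⟩
  · calc |t| ^ (p - 1) = |t| * |t| ^ (p - 2) := by
          rw [show p - 1 = 1 + (p - 2) by ring, Real.rpow_add h0, Real.rpow_one]
      _ ≤ 3 / 2 * a * (4 * a ^ (p - 2)) := by gcongr
      _ = 6 * a * a ^ (p - 2) := by ring
  · calc |t| ^ p = |t| ^ 2 * |t| ^ (p - 2) := by
          rw [← Real.rpow_two, ← Real.rpow_add h0]; ring_nf
      _ ≤ (3 / 2 * a) ^ 2 * (4 * a ^ (p - 2)) := by gcongr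
      _ = 9 * a ^ 2 * a ^ (p - 2) := by ring

lemma max_rpow_le {s a m e : ℝ} (he : 0 ≤ e) (hs : 0 ≤ s) (hsa : s ≤ 2 * a) :
    max s m ^ e ≤ 2 ^ e * max a m ^ e := by
  have ha : 0 ≤ max a m := le_max_of_le_left (by linarith)
  rw [← Real.mul_rpow zero_le_two ha]
  gcongr
  exact max_le (hsa.trans (by gcongr; exact le_max_left _ _))
    ((le_max_right a m).trans (by linarith))

lemma four_add_mul_add_mul_le {M γ β : ℝ} (hM : 0 ≤ M) (hγ : 0 ≤ γ) (hβ : 0 ≤ β) :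
    4 + 12 * M * (1 + 2 ^ γ * M ^ γ) + 9 * M ^ 2 * (1 + 2 ^ β * M ^ β) ≤
      25 * (1 + 2 ^ γ + 2 ^ β) * (1 + M ^ (γ + β + 2)) := by
  have absorb := fun c (hc : 0 ≤ c) (hce : c ≤ γ + β + 2) => rpow_le_one_add_rpow hM hc hce
  have c1 : M ≤ 1 + M ^ (γ + β + 2) := by simpa using absorb 1 zero_le_one (by linarith)
  have c2 : M * M ^ γ ≤ 1 + M ^ (γ + β + 2) := by
    simpa [Real.rpow_add' hM (by linarith : 1 + γ ≠ 0)] using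
      absorb (1 + γ) (by linarith) (by linarith)
  have c3 : M ^ 2 ≤ 1 + M ^ (γ + β + 2) := by
    simpa [Real.rpow_two] using absorb 2 zero_le_two (by linarith)
  have c4 : M ^ 2 * M ^ β ≤ 1 + M ^ (γ + β + 2) := by
    simpa [Real.rpow_add' hM (by linarith : 2 + β ≠ 0), Real.rpow_two] using
      absorb (2 + β) (by linarith) (by linarith)
  have hG : 0 ≤ (2 : ℝ) ^ γ := by positivity
  have hB : 0 ≤ (2 : ℝ) ^ β := by positivity
  have hS : 0 ≤ M ^ (γ + β + 2) := Real.rpow_nonneg hM _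
  linarith [mul_le_mul_of_nonneg_left c2 hG, mul_le_mul_of_nonneg_left c4 hB,
    mul_nonneg hG hS, mul_nonneg hB hS]

lemma abs_second_deriv_abs_rpow_mul_le {p γ β m U a t F F₁ F₂ : ℝ}
    (hp : p ∈ Set.Icc (0 : ℝ) 1) (hγ : 0 ≤ γ) (hβ : 0 ≤ β) (ha : 0 < a)
    (ht : a / 2 ≤ |t|) (ht' : |t| ≤ 3 / 2 * a) (hF : |F| ≤ U)
    (hF₁ : |F₁| ≤ (1 + max |t| m ^ γ) * U) (hF₂ : |F₂| ≤ (1 + max |t| m ^ β) * U) :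
    |p * (p - 1) * |t| ^ (p - 2) * F + 2 * p * |t| ^ (p - 1) * SignType.sign t * F₁
        + |t| ^ p * F₂| ≤
      25 * (1 + 2 ^ γ + 2 ^ β) * U * a ^ (p - 2) * (1 + max a m ^ (γ + β + 2)) := by
  obtain ⟨hp0, hp1⟩ := hp
  set M := max a m
  have hM : a ≤ M := le_max_left a m
  have hU : 0 ≤ U := (abs_nonneg F).trans hF
  have hP : 0 ≤ a ^ (p - 2) := Real.rpow_nonneg ha.le _
  obtain ⟨A0, A1, A2⟩ := abs_rpow_le_of_mem_annulus hp0 (by linarith) ha ht ht'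
  have hmax : ∀ e : ℝ, 0 ≤ e → max |t| m ^ e ≤ 2 ^ e * M ^ e := fun e he =>
    max_rpow_le he (abs_nonneg t) (by linarith)
  have hsign : |(SignType.sign t : ℝ)| = 1 :=
    abs_sign_of_ne_zero (abs_pos.1 (by linarith))
  have T0 : |p * (p - 1) * |t| ^ (p - 2) * F| ≤ 1 * (4 * a ^ (p - 2)) * U := by
    have hpp : |p * (p - 1)| ≤ 1 := abs_le.2 ⟨by nlinarith, by nlinarith⟩
    rw [abs_mul, abs_mul, abs_of_nonneg (Real.rpow_nonneg (abs_nonneg t) _)]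
    exact mul_le_mul (mul_le_mul hpp A0 (by positivity) zero_le_one) hF (abs_nonneg F)
      (by positivity)
  have T1 : |2 * p * |t| ^ (p - 1) * SignType.sign t * F₁| ≤
      2 * 1 * (6 * M * a ^ (p - 2)) * 1 * ((1 + 2 ^ γ * M ^ γ) * U) := by
    rw [abs_mul, abs_mul, abs_mul, abs_mul, hsign, abs_two, abs_of_nonneg hp0,
      abs_of_nonneg (Real.rpow_nonneg (abs_nonneg t) _)]
    gcongr
    · exact A1.trans (by gcongr)
    · exact hF₁.trans (by gcongr; exact hmax γ hγ)
  have T2 : |(|t| ^ p * F₂)| ≤ 9 * M ^ 2 * a ^ (p - 2) * ((1 + 2 ^ β * M ^ β) * U) := by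
    rw [abs_mul, abs_of_nonneg (Real.rpow_nonneg (abs_nonneg t) _)]
    gcongr
    · exact A2.trans (by gcongr)
    · exact hF₂.trans (by gcongr; exact hmax β hβ)
  calc _ ≤ _ := abs_add_three _ _ _
    _ ≤ _ := add_le_add_three T0 T1 T2
    _ = (4 + 12 * M * (1 + 2 ^ γ * M ^ γ) + 9 * M ^ 2 * (1 + 2 ^ β * M ^ β)) *
          (U * a ^ (p - 2)) := by ring
    _ ≤ 25 * (1 + 2 ^ γ + 2 ^ β) * (1 + M ^ (γ + β + 2)) * (U * a ^ (p - 2)) := by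
        gcongr
        exact four_add_mul_add_mul_le (ha.le.trans hM) hγ hβ
    _ = _ := by ring

theorem abs_deriv_abs_rpow_mul_sub_le {p γ β m U : ℝ} (hp : p ∈ Set.Icc (0 : ℝ) 1)
    (hγ : 0 ≤ γ) (hβ : 0 ≤ β) {f f₁ f₂ : ℝ → ℝ}
    (hf : ∀ t, HasDerivAt f (f₁ t) t) (hf₁ : ∀ t, HasDerivAt f₁ (f₂ t) t)
    (hb : ∀ t, |f t| ≤ U) (hb₁ : ∀ t, |f₁ t| ≤ (1 + max |t| m ^ γ) * U)
    (hb₂ : ∀ t, |f₂ t| ≤ (1 + max |t| m ^ β) * U) {w z : ℝ} (hw : w ≠ 0)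
    (hz : |z| ≤ |w| / 2) :
    |deriv (fun t => |t| ^ p * f t) (w + z) - deriv (fun t => |t| ^ p * f t) w| ≤
      25 * (1 + 2 ^ γ + 2 ^ β) * U * |z| *
        (1 + max |w| m ^ (γ + β + 2) + |z| ^ (γ + β + 2)) * (1 + |w| ^ (p - 2)) := by
  have hann : ∀ t ∈ Set.uIcc w (w + z), |w| / 2 ≤ |t| ∧ |t| ≤ 3 / 2 * |w| := by
    intro t ht
    have h := Set.abs_sub_left_of_mem_uIcc ht
    rw [add_sub_cancel_left] at h
    constructor
    · linarith [abs_sub_abs_le_abs_sub w t, abs_sub_comm t w]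
    · linarith [abs_sub_abs_le_abs_sub t w]
  have hne : ∀ t ∈ Set.uIcc w (w + z), t ≠ 0 := fun t ht =>
    abs_pos.1 (lt_of_lt_of_le (by positivity) (hann t ht).1)
  have hderiv : ∀ t ∈ Set.uIcc w (w + z), deriv (fun t => |t| ^ p * f t) t =
      p * |t| ^ (p - 1) * SignType.sign t * f t + |t| ^ p * f₁ t := fun t ht =>
    (hasDerivAt_abs_rpow_mul (hne t ht) (hf t)).deriv
  have hmvt := Convex.norm_image_sub_le_of_norm_hasDerivWithin_le
    (fun t ht =>
      (hasDerivAt_deriv_abs_rpow_mul (p := p) (hne t ht) (hf t) (hf₁ t)).hasDerivWithinAt)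
    (fun t ht => abs_second_deriv_abs_rpow_mul_le hp hγ hβ (abs_pos.2 hw) (hann t ht).1
      (hann t ht).2 (hb t) (hb₁ t) (hb₂ t))
    (convex_uIcc w (w + z)) Set.left_mem_uIcc Set.right_mem_uIcc
  rw [hderiv _ Set.left_mem_uIcc, hderiv _ Set.right_mem_uIcc]
  simp only [Real.norm_eq_abs, add_sub_cancel_left] at hmvt
  refine hmvt.trans ?_
  have hU : 0 ≤ U := (abs_nonneg _).trans (hb 0)
  have hK : 0 ≤ 25 * (1 + 2 ^ γ + 2 ^ β) * U * |z| := by positivity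
  have hP := Real.rpow_nonneg (abs_nonneg w) (p - 2)
  have hS := Real.rpow_nonneg (le_max_of_le_left (abs_nonneg w) : 0 ≤ max |w| m) (γ + β + 2)
  have hZ := Real.rpow_nonneg (abs_nonneg z) (γ + β + 2)
  calc _ = 25 * (1 + 2 ^ γ + 2 ^ β) * U * |z| *
        (|w| ^ (p - 2) * (1 + max |w| m ^ (γ + β + 2))) := by ring
    _ ≤ 25 * (1 + 2 ^ γ + 2 ^ β) * U * |z| *
        ((1 + max |w| m ^ (γ + β + 2) + |z| ^ (γ + β + 2)) * (1 + |w| ^ (p - 2))) :=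
      mul_le_mul_of_nonneg_left (by nlinarith [mul_nonneg hP hZ]) hK
    _ = _ := by ring

/-- **Second derivative increment bound (inequality (4.7) in the proof of Proposition 4.6)**:
for `g(w,x,y) = |w|^{p₁} L(w,x,y)` with `|L| ≤ u(y)`, `|∂₁L| ≤ (1+‖(w,x)‖^γ)u(y)` and
`|∂²₁₁L| ≤ (1+‖(w,x)‖^β)u(y)`, there are `K > 0` and `h' ≥ 0` such that for `w ≠ 0` and
`|z| ≤ |w|/2`,
`|∂₁g(w+z,x,y) − ∂₁g(w,x,y)| ≤ K u(y) |z| (1 + ‖(w,x)‖^{h'} + |z|^{h'})(1 + |w|^{p₁−2})`,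
where `‖(w,x)‖ = max |w| ‖x‖` is the maximum norm. -/
theorem stmt11 (d l : ℕ) (hl : 1 ≤ l) (hld : l ≤ d)
    (p₁ : ℝ) (hp₁ : p₁ ∈ Set.Ioo (0:ℝ) 1)
    (u : (Fin (d - l) → ℝ) → ℝ)
    (γ β : ℝ) (hγ : 0 ≤ γ) (hβ : 0 ≤ β)
    (L : (Fin d → ℝ) → ℝ) (hL : ContDiff ℝ 2 L)
    (hLbound : ∀ (w : ℝ) (x : Fin (l - 1) → ℝ) (y : Fin (d - l) → ℝ),
      |L (splice3 d l hl hld w x y)| ≤ u y)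
    (hDbound : ∀ (w : ℝ) (x : Fin (l - 1) → ℝ) (y : Fin (d - l) → ℝ),
      |fderiv ℝ L (splice3 d l hl hld w x y) (Pi.single (⟨0, by omega⟩ : Fin d) 1)| ≤
        (1 + (max |w| ‖x‖) ^ γ) * u y)
    (hD2bound : ∀ (w : ℝ) (x : Fin (l - 1) → ℝ) (y : Fin (d - l) → ℝ),
      |fderiv ℝ (fun v => fderiv ℝ L v (Pi.single (⟨0, by omega⟩ : Fin d) 1))
          (splice3 d l hl hld w x y) (Pi.single (⟨0, by omega⟩ : Fin d) 1)| ≤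
        (1 + (max |w| ‖x‖) ^ β) * u y) :
    ∃ K h' : ℝ, 0 < K ∧ 0 ≤ h' ∧
      ∀ (w : ℝ), w ≠ 0 → ∀ (z : ℝ), |z| ≤ |w| / 2 →
        ∀ (x : Fin (l - 1) → ℝ) (y : Fin (d - l) → ℝ),
          |deriv (fun w' : ℝ => |w'| ^ p₁ * L (splice3 d l hl hld w' x y)) (w + z) -
            deriv (fun w' : ℝ => |w'| ^ p₁ * L (splice3 d l hl hld w' x y)) w| ≤
          K * u y * |z| * (1 + (max |w| ‖x‖) ^ h' + |z| ^ h') * (1 + |w| ^ (p₁ - 2)) := by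
  refine ⟨25 * (1 + 2 ^ γ + 2 ^ β), γ + β + 2, by positivity, by positivity, ?_⟩
  intro w hw z hz x y
  have hL₁ : ∀ e : Fin d → ℝ, Differentiable ℝ (fun v => fderiv ℝ L v e) := fun e =>
    ((hL.fderiv_right (m := 1) (by norm_num)).clm_apply contDiff_const).differentiable
      one_ne_zero
  exact abs_deriv_abs_rpow_mul_sub_le (Set.Ioo_subset_Icc_self hp₁) hγ hβ
    (fun t => ((hL.differentiable two_ne_zero) _).hasFDerivAt.comp_hasDerivAt t
      (hasDerivAt_splice3 d l hl hld x y t))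
    (fun t => (hL₁ _ _).hasFDerivAt.comp_hasDerivAt t (hasDerivAt_splice3 d l hl hld x y t))
    (fun t => hLbound t x y) (fun t => hDbound t x y) (fun t => hD2bound t x y) hw hz
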